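/- arXiv:1706.04641 — 5 statements merged into one kernel-verified Lean document; each statement's English description precedes it below -/
import Mathlib

section
/- Let H be a subgroup of Equiv.Perm (Fin n), let b : Fin t → Fin n be a base for H, and let φ be a permutation of Fin n. Then there is a unique element ψ of the left coset φH (i.e., ψ = φ · h for some h ∈ H) such that for every χ ∈ φH, the tuple (ψ(b 0), …, ψ(b (t−1))) is lexicographically ≤ the tuple (χ(b 0), …, χ(b (t−1))). In particular this canonical coset element depends only on the coset φH and not on the representative φ. -/
/-!
Two elements of the same coset `φH` that agree on a base differ by an element of `H` fixing the
base, hence coincide. So `χ ↦ (χ (b 0), …, χ (b (t-1)))` is injective on the finite set `φH`, and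
its lexicographic minimum over `φH` (a linear order) is attained at exactly one point. The
minimality condition only refers to the set `φH`, which is the same for every representative.
-/

theorem Set.Finite.existsUnique_forall_le_image {γ β : Type*} [LinearOrder β] {s : Set γ}
    (hs : s.Finite) (hne : s.Nonempty) {f : γ → β} (hf : s.InjOn f) :
    ∃! x, x ∈ s ∧ ∀ y ∈ s, f x ≤ f y := by
  obtain ⟨x, hx, hmin⟩ := s.exists_min_image f hs hne
  refine ⟨x, ⟨hx, hmin⟩, fun y ⟨hy, hymin⟩ => hf hy hx ?_⟩
  exact le_antisymm (hymin x hx) (hmin y hy)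

section Coset

variable {G : Type*} [Group G] (H : Subgroup G)

theorem Subgroup.exists_mem_eq_mul_iff (φ χ : G) : (∃ h ∈ H, χ = φ * h) ↔ φ⁻¹ * χ ∈ H :=
  ⟨fun ⟨h, hh, hχ⟩ => by simpa [hχ], fun hχ => ⟨_, hχ, by group⟩⟩

theorem Subgroup.exists_mem_eq_mul_iff_of_mem {φ φ' : G} (hφ' : ∃ h ∈ H, φ' = φ * h) (χ : G) :
    (∃ h ∈ H, χ = φ * h) ↔ (∃ h ∈ H, χ = φ' * h) := by
  rw [H.exists_mem_eq_mul_iff] at hφ'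
  rw [H.exists_mem_eq_mul_iff, H.exists_mem_eq_mul_iff,
    ← H.mul_mem_cancel_left hφ' (y := φ'⁻¹ * χ), mul_assoc, mul_inv_cancel_left]

end Coset

section Base

variable {α ι : Type*}

def Subgroup.IsBase (H : Subgroup (Equiv.Perm α)) (b : ι → α) : Prop :=
  ∀ h ∈ H, (∀ i, h (b i) = b i) → h = 1

theorem Subgroup.IsBase.injOn_coset {H : Subgroup (Equiv.Perm α)} {b : ι → α} (hb : H.IsBase b)
    (φ : Equiv.Perm α) : {χ | ∃ h ∈ H, χ = φ * h}.InjOn fun χ i => χ (b i) := by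
  intro ψ hψ χ hχ (hψχ : (fun i => ψ (b i)) = fun i => χ (b i))
  rw [Set.mem_ofPred_eq, H.exists_mem_eq_mul_iff] at hψ hχ
  have hmem : ψ⁻¹ * χ ∈ H := by simpa [mul_assoc] using H.mul_mem (H.inv_mem hψ) hχ
  have hfix : ∀ i, (ψ⁻¹ * χ) (b i) = b i := fun i => by
    rw [Equiv.Perm.mul_apply, ← congrFun hψχ i]
    exact ψ.symm_apply_apply (b i)
  exact inv_mul_eq_one.mp (hb _ hmem hfix)

end Base

/-- Given a subgroup `H` of `Equiv.Perm (Fin n)` with base `b`, every left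
coset `φH` contains a unique element whose tuple of images of the base points is
lexicographically minimal over the coset; in particular it depends only on the coset. -/
theorem stmt7 {n t : ℕ} (H : Subgroup (Equiv.Perm (Fin n))) (b : Fin t → Fin n)
    (hbase : ∀ h ∈ H, (∀ i : Fin t, h (b i) = b i) → h = 1)
    (φ : Equiv.Perm (Fin n)) :
    (∃! ψ : Equiv.Perm (Fin n), (∃ h ∈ H, ψ = φ * h) ∧
      ∀ χ : Equiv.Perm (Fin n), (∃ h ∈ H, χ = φ * h) →
        toLex (fun i => ψ (b i)) ≤ toLex (fun i => χ (b i))) ∧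
    (∀ φ' : Equiv.Perm (Fin n), (∃ h ∈ H, φ' = φ * h) →
      ∀ ψ : Equiv.Perm (Fin n),
        (((∃ h ∈ H, ψ = φ * h) ∧
          ∀ χ : Equiv.Perm (Fin n), (∃ h ∈ H, χ = φ * h) →
            toLex (fun i => ψ (b i)) ≤ toLex (fun i => χ (b i))) ↔
        ((∃ h ∈ H, ψ = φ' * h) ∧
          ∀ χ : Equiv.Perm (Fin n), (∃ h ∈ H, χ = φ' * h) →
            toLex (fun i => ψ (b i)) ≤ toLex (fun i => χ (b i))))) := by
  refine ⟨?_, fun φ' hφ' ψ => by simp only [H.exists_mem_eq_mul_iff_of_mem hφ']⟩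
  have hne : {χ | ∃ h ∈ H, χ = φ * h}.Nonempty := ⟨φ, 1, H.one_mem, (mul_one φ).symm⟩
  exact (Set.toFinite _).existsUnique_forall_le_image hne
    (toLex.injective.comp_injOn (Subgroup.IsBase.injOn_coset hbase φ))
end

section
/- Let H be a subgroup of Equiv.Perm (Fin n), let b : Fin t → Fin n be a base for H, let φ be a permutation of Fin n, and let ψ ∈ φH. Then ψ is the element of the coset φH whose tuple of base images (ψ(b 0), …, ψ(b (t−1))) is lexicographically minimal over φH if and only if for every i < t, ψ(b i) is the minimum of the set { χ(b i) | χ ∈ φH and χ(b j) = ψ(b j) for all j < i }. This is the correctness of the Find-First-Isomorphism procedure, which minimizes the images of the base points one at a time using coset representatives of the pointwise stabilizer chain. -/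
/-! A tuple is lexicographically least in a family exactly when it is built greedily: each entry
is the least value attainable among the members that agree with it on all earlier entries. -/

theorem Pi.forall_toLex_le_iff_forall_isLeast {α ι : Type*} {β : ι → Type*} [LinearOrder ι]
    [WellFoundedLT ι] [∀ i, LinearOrder (β i)] (P : α → Prop) (F : α → ∀ i, β i) {a : α}
    (ha : P a) :
    (∀ x, P x → toLex (F a) ≤ toLex (F x)) ↔
      ∀ i, IsLeast {y | ∃ x, P x ∧ (∀ j < i, F x j = F a j) ∧ F x i = y} (F a i) := by
  constructor
  · rintro hmin i
    refine ⟨⟨a, ha, fun _ _ => rfl, rfl⟩, ?_⟩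
    rintro _ ⟨x, hx, hagree, rfl⟩
    exact Pi.apply_le_of_toLex (hmin x hx) fun j hj => (hagree j hj).symm
  · rintro hleast x hx
    refine not_lt.1 ?_
    rintro ⟨i, hagree, hlt⟩
    exact ((hleast i).2 ⟨x, hx, hagree, rfl⟩).not_gt hlt

theorem stmt8_general {n t : ℕ} (H : Subgroup (Equiv.Perm (Fin n))) (b : Fin t → Fin n)
    (φ ψ : Equiv.Perm (Fin n)) (hψ : ∃ h ∈ H, ψ = φ * h) :
    (∀ χ : Equiv.Perm (Fin n), (∃ h ∈ H, χ = φ * h) →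
        toLex (fun i => ψ (b i)) ≤ toLex (fun i => χ (b i))) ↔
      (∀ i : Fin t,
        IsLeast {y : Fin n | ∃ χ : Equiv.Perm (Fin n), (∃ h ∈ H, χ = φ * h) ∧
          (∀ j < i, χ (b j) = ψ (b j)) ∧ χ (b i) = y} (ψ (b i))) :=
  Pi.forall_toLex_le_iff_forall_isLeast (fun χ => ∃ h ∈ H, χ = φ * h) (fun χ i => χ (b i)) hψ

/-- Correctness of Find-First-Isomorphism: `ψ ∈ φH` has lexicographically
minimal base-image tuple over the coset `φH` iff for every `i`, `ψ (b i)` is the minimum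
of `χ (b i)` over those `χ ∈ φH` agreeing with `ψ` on the base points below `i`. -/
theorem stmt8 {n t : ℕ} (H : Subgroup (Equiv.Perm (Fin n))) (b : Fin t → Fin n)
    (hbase : ∀ h ∈ H, (∀ i : Fin t, h (b i) = b i) → h = 1)
    (φ ψ : Equiv.Perm (Fin n)) (hψ : ∃ h ∈ H, ψ = φ * h) :
    (∀ χ : Equiv.Perm (Fin n), (∃ h ∈ H, χ = φ * h) →
        toLex (fun i => ψ (b i)) ≤ toLex (fun i => χ (b i))) ↔
      (∀ i : Fin t,
        IsLeast {y : Fin n | ∃ χ : Equiv.Perm (Fin n), (∃ h ∈ H, χ = φ * h) ∧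
          (∀ j < i, χ (b j) = ψ (b j)) ∧ χ (b i) = y} (ψ (b i))) :=
  stmt8_general H b φ ψ hψ
end

section
/- Every subgroup H of the permutation group of a finite type α has a base of size at most log₂ |H|: there exist t ≤ Nat.log 2 (Fintype.card H) and a family b : Fin t → α such that the identity is the only element of H fixing b i for every i. -/
/-!
If `H` is nontrivial, some element of `H` moves a point `a`, so the stabilizer of `a` in `H` is a
proper subgroup and hence has at most half the order of `H`. A base of that stabilizer, with `a`
prepended, is a base of `H`; iterating, each point added halves the order, so at most
`log₂ |H|` points are needed.
-/

open Equiv MulAction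

theorem Subgroup.two_mul_card_le_card_of_lt {G : Type*} [Group G] {K H : Subgroup G} [Finite H]
    (hKH : K < H) : 2 * Nat.card K ≤ Nat.card H := by
  have hindex : 1 < (K.subgroupOf H).index :=
    one_lt_index_of_ne_top fun h => hKH.not_ge (subgroupOf_eq_top.mp h)
  rw [mul_comm 2, ← (K.subgroupOf H).card_mul_index,
    Nat.card_congr (subgroupOfEquivOfLe hKH.le).toEquiv]
  exact Nat.mul_le_mul_left _ hindex

namespace Subgroup

variable {α : Type*}

def IsBase_s9 (H : Subgroup (Perm α)) {t : ℕ} (b : Fin t → α) : Prop :=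
  ∀ h ∈ H, (∀ i, h (b i) = b i) → h = 1

theorem isBase_bot {t : ℕ} (b : Fin t → α) : (⊥ : Subgroup (Perm α)).IsBase_s9 b :=
  fun _ hh _ => mem_bot.mp hh

theorem IsBase_s9.cons {H : Subgroup (Perm α)} {a : α} {t : ℕ} {b : Fin t → α}
    (hb : (H ⊓ stabilizer (Perm α) a).IsBase_s9 b) : H.IsBase_s9 (Fin.cons a b) := fun h hh hfix =>
  hb h ⟨hh, by simpa using hfix 0⟩ fun i => by simpa using hfix i.succ

theorem exists_inf_stabilizer_lt {H : Subgroup (Perm α)} (hH : H ≠ ⊥) :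
    ∃ a : α, H ⊓ stabilizer (Perm α) a < H := by
  obtain ⟨⟨h, hh⟩, h1⟩ := ne_bot_iff_exists_ne_one.mp hH
  obtain ⟨a, ha⟩ : ∃ a, h a ≠ a :=
    not_forall.mp fun hfix => h1 (Subtype.ext (Perm.ext hfix))
  exact ⟨a, inf_le_left.lt_of_not_ge fun hle => ha (hle hh).2⟩

theorem exists_isBase_length_le_log (H : Subgroup (Perm α)) [Finite H] :
    ∃ t ≤ Nat.log 2 (Nat.card H), ∃ b : Fin t → α, H.IsBase_s9 b := by
  induction hn : Nat.card H using Nat.strong_induction_on generalizing H with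
  | _ n ih =>
    obtain rfl | hH := eq_or_ne H ⊥
    · exact ⟨0, Nat.zero_le _, Fin.elim0, isBase_bot _⟩
    obtain ⟨a, hlt⟩ := exists_inf_stabilizer_lt hH
    set K := H ⊓ stabilizer (Perm α) a
    have : Finite K := Finite.of_injective _ (inclusion_injective hlt.le)
    have hK : 2 * Nat.card K ≤ n := hn ▸ two_mul_card_le_card_of_lt hlt
    have hKpos : 0 < Nat.card K := Nat.card_pos
    obtain ⟨t, ht, b, hb⟩ := ih _ (by omega) K rfl
    refine ⟨t + 1, ?_, Fin.cons a b, hb.cons⟩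
    calc t + 1 ≤ Nat.log 2 (Nat.card K * 2) := by
          rw [Nat.log_mul_base one_lt_two hKpos.ne']; omega
      _ ≤ Nat.log 2 n := Nat.log_mono_right (by omega)

end Subgroup

theorem stmt9_general {α : Type*} [Fintype α] (H : Subgroup (Equiv.Perm α)) :
    ∃ t : ℕ, t ≤ Nat.log 2 (Nat.card H) ∧
      ∃ b : Fin t → α, ∀ h ∈ H, (∀ i : Fin t, h (b i) = b i) → h = 1 :=
  H.exists_isBase_length_le_log

/-- Every subgroup of the permutation group of a finite type has a base of
size at most log₂ of its order. -/
theorem stmt9 {α : Type*} [Fintype α] [DecidableEq α] (H : Subgroup (Equiv.Perm α)) :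
    ∃ t : ℕ, t ≤ Nat.log 2 (Nat.card H) ∧
      ∃ b : Fin t → α, ∀ h ∈ H, (∀ i : Fin t, h (b i) = b i) → h = 1 :=
  stmt9_general H
end

section
/- Let A be a finite set in a type α and let g : α → α → α satisfy g x y ∈ {x, y} and g x y = g y x for all x, y ∈ A. Then there exists a subset S ⊆ A with |S| ≤ ⌈log₂(|A| + 1)⌉ such that for every x ∈ A there is some s ∈ S with g x s = x. (This is the advice-set construction used to place an NP-complete language in coNP/poly: S is a small set of elements of L such that every element of L is 'selected' against some member of S.) -/
/-!
Counting every unordered pair `{x, s}` once, the sets `{x ∈ A | g x s = x}` for `s ∈ A` have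
total size `|A| (|A| + 1) / 2`, so some `s` is selected against by at least `(|A| + 1) / 2`
elements. Put that `s` into `S` and recurse on the elements losing against it: this at least
halves `|A| + 1`, so the recursion stops after `⌈log₂ (|A| + 1)⌉` rounds.
-/

open Finset

theorem Nat.clog_add_one_le_of_mul_le {b m n : ℕ} (hb : 1 < b) (hm : 0 < m) (h : b * m ≤ n) :
    Nat.clog b m + 1 ≤ Nat.clog b n := by
  rw [Nat.clog_of_two_le (n := n) hb (by nlinarith)]
  refine Nat.add_le_add_right (Nat.clog_mono_right b ?_) 1
  rw [Nat.le_div_iff_mul_le (by omega), mul_comm]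
  omega

section Selector

variable {α : Type*} [DecidableEq α] {A : Finset α} {g : α → α → α}

theorem card_filter_eq_left_add_card_filter_eq_right
    (hsel : ∀ x ∈ A, ∀ y ∈ A, g x y = x ∨ g x y = y) {s : α} (hs : s ∈ A) :
    #{x ∈ A | g x s = x} + #{x ∈ A | g x s = s} = #A + 1 := by
  have hunion : {x ∈ A | g x s = x} ∪ {x ∈ A | g x s = s} = A := by
    rw [← filter_or]
    exact filter_true_of_mem fun x hx => hsel x hx s hs
  have hss : g s s = s := (hsel s hs s hs).elim id id
  have hinter : {x ∈ A | g x s = x} ∩ {x ∈ A | g x s = s} = {s} := by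
    ext x
    simp only [mem_inter, mem_filter, mem_singleton]
    constructor
    · rintro ⟨⟨-, hx⟩, -, hxs⟩
      exact hx.symm.trans hxs
    · rintro rfl
      exact ⟨⟨hs, hss⟩, hs, hss⟩
  rw [← card_union_add_card_inter, hunion, hinter, card_singleton]

theorem sum_card_filter_eq_right_eq_sum_card_filter_eq_left
    (hsym : ∀ x ∈ A, ∀ y ∈ A, g x y = g y x) :
    ∑ s ∈ A, #{x ∈ A | g x s = s} = ∑ s ∈ A, #{x ∈ A | g x s = x} := by
  calc ∑ s ∈ A, #{x ∈ A | g x s = s}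
      = ∑ s ∈ A, #(A.bipartiteAbove (fun x s => g x s = x) s) :=
        sum_congr rfl fun s hs => congrArg card (filter_congr fun x hx => by rw [hsym x hx s hs])
    _ = ∑ s ∈ A, #(A.bipartiteBelow (fun x s => g x s = x) s) :=
        sum_card_bipartiteAbove_eq_sum_card_bipartiteBelow _

theorem exists_card_add_one_le_two_mul_card_filter_eq_left
    (hsel : ∀ x ∈ A, ∀ y ∈ A, g x y = x ∨ g x y = y)
    (hsym : ∀ x ∈ A, ∀ y ∈ A, g x y = g y x) (hA : A.Nonempty) :
    ∃ s ∈ A, #A + 1 ≤ 2 * #{x ∈ A | g x s = x} := by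
  refine exists_le_of_sum_le hA (le_of_eq ?_)
  calc ∑ _s ∈ A, (#A + 1)
      = ∑ s ∈ A, (#{x ∈ A | g x s = x} + #{x ∈ A | g x s = s}) :=
        (sum_congr rfl fun s hs => card_filter_eq_left_add_card_filter_eq_right hsel hs).symm
    _ = ∑ s ∈ A, 2 * #{x ∈ A | g x s = x} := by
        rw [sum_add_distrib, sum_card_filter_eq_right_eq_sum_card_filter_eq_left hsym,
          ← mul_sum]
        ring

end Selector

/-- Advice-set construction: for a symmetric selector `g` on a finite set
`A`, there is a subset `S ⊆ A` of size at most ⌈log₂(|A|+1)⌉ such that every `x ∈ A` is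
selected against some member of `S`. -/
theorem stmt11 {α : Type*} [DecidableEq α] (A : Finset α) (g : α → α → α)
    (hsel : ∀ x ∈ A, ∀ y ∈ A, g x y = x ∨ g x y = y)
    (hsym : ∀ x ∈ A, ∀ y ∈ A, g x y = g y x) :
    ∃ S ⊆ A, S.card ≤ Nat.clog 2 (A.card + 1) ∧
      ∀ x ∈ A, ∃ s ∈ S, g x s = x := by
  induction A using Finset.strongInduction with
  | H A ih =>
  rcases A.eq_empty_or_nonempty with rfl | hA
  · exact ⟨∅, empty_subset _, by simp, by simp⟩
  obtain ⟨s, hsA, hs⟩ := exists_card_add_one_le_two_mul_card_filter_eq_left hsel hsym hA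
  set B := {x ∈ A | ¬g x s = x}
  have hBA : B ⊂ A := filter_ssubset.2 ⟨s, hsA, not_not.2 ((hsel s hsA s hsA).elim id id)⟩
  have hB : 2 * (#B + 1) ≤ #A + 1 := by
    have hsplit : #{x ∈ A | g x s = x} + #B = #A := card_filter_add_card_filter_not _
    omega
  obtain ⟨S, hSB, hScard, hS⟩ := ih B hBA (fun x hx y hy => hsel x (hBA.1 hx) y (hBA.1 hy))
    (fun x hx y hy => hsym x (hBA.1 hx) y (hBA.1 hy))
  refine ⟨insert s S, insert_subset hsA (hSB.trans hBA.1), ?_, fun x hx => ?_⟩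
  · calc #(insert s S) ≤ #S + 1 := card_insert_le _ _
      _ ≤ Nat.clog 2 (#B + 1) + 1 := by omega
      _ ≤ Nat.clog 2 (#A + 1) := Nat.clog_add_one_le_of_mul_le one_lt_two (by omega) hB
  by_cases hxs : g x s = x
  · exact ⟨s, mem_insert_self _ _, hxs⟩
  · obtain ⟨t, ht, hxt⟩ := hS x (mem_filter.2 ⟨hx, hxs⟩)
    exact ⟨t, mem_insert_of_mem ht, hxt⟩
end

section
/- Let G be a simple graph on a finite linearly ordered vertex type V, let s ≠ t with t reachable from s, and let p be the unique walk from s to t of length G.dist s t whose support is lexicographically least. Write p as an edge from s to a vertex v followed by a walk q from v to t. Then v is the minimum of the set { u ∈ V | G.Adj s u and G.dist u t + 1 = G.dist s t }, and q is the unique walk from v to t of length G.dist v t whose support is lexicographically least. (This is the correctness of the greedy recursion computing the canonical shortest path in the pseudo-deterministic NL algorithm.) -/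
/-!
Prepending the edge `s v` to walks from `v` to `t` preserves both being shortest (along a
shortest walk the distance to `t` drops by exactly one at each step) and lexicographic
comparison of supports (they all start with `s`). Hence the tail `q` of the lex-least shortest
walk from `s` is the lex-least shortest walk from `v`, and comparing its support with that of
`s :: w` for a shortest walk `w` from another admissible neighbour `u` shows `v ≤ u`. Uniqueness
holds because a walk is determined by its support and lexicographic order is asymmetric.
-/

namespace List

theorem head_le_of_lex_cons {α : Type*} [LinearOrder α] {a b : α} {l l' : List α}
    (h : Lex (· < ·) (a :: l) (b :: l')) : a ≤ b := by
  cases h with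
  | cons => exact le_rfl
  | rel hab => exact hab.le

end List

namespace SimpleGraph

variable {V : Type*} {G : SimpleGraph V} {s t u v : V}

theorem Adj.dist_le_dist_add_one (hadj : G.Adj s v) : G.dist s t ≤ G.dist v t + 1 := by
  have := hadj.reachable.dist_triangle_left t
  rwa [dist_eq_one_iff_adj.mpr hadj, add_comm] at this

namespace Walk

theorem dist_add_one_eq_of_length_cons_eq_dist {hadj : G.Adj s v} {q : G.Walk v t}
    (h : (cons hadj q).length = G.dist s t) : G.dist v t + 1 = G.dist s t := by
  have := dist_le q
  have := hadj.dist_le_dist_add_one (t := t)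
  rw [length_cons] at h
  omega

theorem length_eq_dist_of_length_cons_eq_dist {hadj : G.Adj s v} {q : G.Walk v t}
    (h : (cons hadj q).length = G.dist s t) : q.length = G.dist v t := by
  have := dist_add_one_eq_of_length_cons_eq_dist h
  rw [length_cons] at h
  omega

variable [LinearOrder V]

def IsLexLeastShortest (p : G.Walk u t) : Prop :=
  p.length = G.dist u t ∧ ∀ r : G.Walk u t, r.length = G.dist u t →
    p.support = r.support ∨ List.Lex (· < ·) p.support r.support

theorem IsLexLeastShortest.unique {p p' : G.Walk u t} (hp : p.IsLexLeastShortest)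
    (hp' : p'.IsLexLeastShortest) : p = p' := by
  rcases hp.2 p' hp'.1 with h | h
  · exact support_injective h
  · rcases hp'.2 p hp.1 with h' | h'
    · exact (support_injective h').symm
    · exact absurd h (asymm h')

theorem IsLexLeastShortest.of_cons {hadj : G.Adj s v} {q : G.Walk v t}
    (h : (cons hadj q).IsLexLeastShortest) : q.IsLexLeastShortest := by
  have hq := length_eq_dist_of_length_cons_eq_dist h.1
  refine ⟨hq, fun r hr => ?_⟩
  have hcons : (cons hadj r).length = G.dist s t := by
    rw [← h.1, length_cons, length_cons, hr, hq]
  simpa only [support_cons, List.cons.injEq, true_and, List.lex_cons_iff] using h.2 _ hcons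

theorem IsLexLeastShortest.snd_le {hadj : G.Adj s v} {q : G.Walk v t}
    (h : (cons hadj q).IsLexLeastShortest) (hu : G.Adj s u)
    (hdist : G.dist u t + 1 = G.dist s t) : v ≤ u := by
  obtain ⟨w, hw⟩ := (hu.symm.reachable.trans (cons hadj q).reachable).exists_walk_length_eq_dist
  have hcons : (cons hu w).length = G.dist s t := by rw [length_cons, hw, hdist]
  have hcmp := h.2 _ hcons
  simp only [support_cons, List.cons.injEq, true_and, List.lex_cons_iff] at hcmp
  rw [← q.cons_tail_support, ← w.cons_tail_support] at hcmp
  rcases hcmp with heq | hlex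
  · exact (List.cons.inj heq).1.le
  · exact List.head_le_of_lex_cons hlex

end Walk

end SimpleGraph

open SimpleGraph

theorem stmt13_general {V : Type*} [LinearOrder V] (G : SimpleGraph V)
    (s t : V)
    (v : V) (hadj : G.Adj s v) (q : G.Walk v t)
    (hlen : (SimpleGraph.Walk.cons hadj q).length = G.dist s t)
    (hmin : ∀ r : G.Walk s t, r.length = G.dist s t →
      (SimpleGraph.Walk.cons hadj q).support = r.support ∨
        List.Lex (· < ·) (SimpleGraph.Walk.cons hadj q).support r.support) :
    IsLeast {u : V | G.Adj s u ∧ G.dist u t + 1 = G.dist s t} v ∧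
    (q.length = G.dist v t ∧
      ∀ r : G.Walk v t, r.length = G.dist v t →
        q.support = r.support ∨ List.Lex (· < ·) q.support r.support) ∧
    (∀ q' : G.Walk v t,
      (q'.length = G.dist v t ∧
        ∀ r : G.Walk v t, r.length = G.dist v t →
          q'.support = r.support ∨ List.Lex (· < ·) q'.support r.support) →
      q' = q) := by
  have hp : (Walk.cons hadj q).IsLexLeastShortest := ⟨hlen, hmin⟩
  have hq : q.IsLexLeastShortest := hp.of_cons
  exact ⟨⟨⟨hadj, Walk.dist_add_one_eq_of_length_cons_eq_dist hlen⟩,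
      fun u ⟨hu, hdist⟩ => hp.snd_le hu hdist⟩,
    hq, fun q' hq' => Walk.IsLexLeastShortest.unique hq' hq⟩

/-- Greedy recursion for the canonical shortest path: if
`Walk.cons hadj q` (an edge from `s` to `v` followed by `q : Walk v t`) is the
lexicographically-least shortest walk from `s` to `t` (with `s ≠ t`), then `v` is the
least neighbor of `s` lying on a shortest path, and `q` is the unique
lexicographically-least shortest walk from `v` to `t`. -/
theorem stmt13 {V : Type*} [Fintype V] [LinearOrder V] (G : SimpleGraph V)
    (s t : V) (hne : s ≠ t) (hreach : G.Reachable s t)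
    (v : V) (hadj : G.Adj s v) (q : G.Walk v t)
    (hlen : (SimpleGraph.Walk.cons hadj q).length = G.dist s t)
    (hmin : ∀ r : G.Walk s t, r.length = G.dist s t →
      (SimpleGraph.Walk.cons hadj q).support = r.support ∨
        List.Lex (· < ·) (SimpleGraph.Walk.cons hadj q).support r.support) :
    IsLeast {u : V | G.Adj s u ∧ G.dist u t + 1 = G.dist s t} v ∧
    (q.length = G.dist v t ∧
      ∀ r : G.Walk v t, r.length = G.dist v t →
        q.support = r.support ∨ List.Lex (· < ·) q.support r.support) ∧
    (∀ q' : G.Walk v t,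
      (q'.length = G.dist v t ∧
        ∀ r : G.Walk v t, r.length = G.dist v t →
          q'.support = r.support ∨ List.Lex (· < ·) q'.support r.support) →
      q' = q) :=
  stmt13_general G s t v hadj q hlen hmin
end
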